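/- arXiv:1110.2839 — 5 statements merged into one kernel-verified Lean document; each statement's English description precedes it below -/
import Mathlib

section
/- For all integers n, N with 1 ≤ n ≤ N-1 and all real x, one has the identity n! Δ^n[ C(x,n) · C(x-N,n) ] = (-1)^n (N-n)_n ∑_{k=0}^n ((-n)_k (-x)_k (n+1)_k)/((-N+1)_k (k!)^2), where Δ is the forward difference operator in x, i.e. the definition of the discrete Chebyshev polynomial by iterated forward differences coincides with its hypergeometric-sum representation. -/
open Finset

/-- Pochhammer rising factorial `(z)_k = z (z+1) ⋯ (z+k-1)`. -/
noncomputable def poch (z : ℝ) (k : ℕ) : ℝ := ∏ i ∈ Finset.range k, (z + i)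

/-- Generalized binomial coefficient `C(y, n) = y (y-1) ⋯ (y-n+1) / n!`. -/
noncomputable def gbinom (y : ℝ) (n : ℕ) : ℝ :=
  (∏ i ∈ Finset.range n, (y - i)) / (Nat.factorial n : ℝ)

/-- Forward difference operator `(Δ f)(x) = f(x+1) - f(x)`. -/
def fwdDiffOp (f : ℝ → ℝ) : ℝ → ℝ := fun x => f (x + 1) - f x

/-! ### auxiliary lemmas -/

lemma gbinom_succ_mul (y : ℝ) (k : ℕ) :
    ((k : ℝ) + 1) * gbinom y (k + 1) = (y - k) * gbinom y k := by
  unfold gbinom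
  rw [prod_range_succ, Nat.factorial_succ]
  have hk : (Nat.factorial k : ℝ) ≠ 0 := Nat.cast_ne_zero.2 (Nat.factorial_ne_zero k)
  push_cast
  field_simp

lemma prod_sub_eq_poch_neg (z : ℝ) (k : ℕ) :
    ∏ i ∈ range k, (z - i) = (-1 : ℝ)^k * poch (-z) k := by
  unfold poch
  have : ∀ i ∈ range k, (z - (i:ℝ)) = (-1) * (-z + i) := by intros; ring
  rw [prod_congr rfl this, prod_mul_distrib, prod_const, card_range]

lemma prod_range_nat_sub_mul_fact (n : ℕ) : ∀ k ≤ n,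
    (∏ i ∈ range k, ((n : ℝ) - i)) * ((n - k).factorial : ℝ) = (n.factorial : ℝ) := by
  intro k
  induction k with
  | zero => simp
  | succ k ih =>
    intro hk
    have hk' : k ≤ n := by omega
    have h1 : n - k = (n - (k + 1)) + 1 := by omega
    rw [prod_range_succ, ← ih hk', h1, Nat.factorial_succ]
    have : ((n - (k+1) : ℕ) : ℝ) + 1 = (n : ℝ) - k := by
      have : ((n - (k+1) : ℕ) : ℝ) = (n : ℝ) - (k+1) := by
        push_cast [Nat.cast_sub hk]; ring
      rw [this]; ring
    push_cast
    rw [this]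
    ring

lemma poch_cast_add_one_mul_fact (n : ℕ) (k : ℕ) :
    poch ((n : ℝ) + 1) k * (n.factorial : ℝ) = ((n + k).factorial : ℝ) := by
  induction k with
  | zero => simp [poch]
  | succ k ih =>
    rw [show poch ((n:ℝ)+1) (k+1) = poch ((n:ℝ)+1) k * ((n:ℝ)+1+k) from by
      simp [poch, prod_range_succ]]
    have : (n + (k+1)) = (n + k) + 1 := by omega
    rw [this, Nat.factorial_succ]
    push_cast
    nlinarith [ih]

lemma poch_add (z : ℝ) (a b : ℕ) : poch z (a + b) = poch z a * poch (z + a) b := by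
  unfold poch
  rw [prod_range_add]
  congr 1
  apply prod_congr rfl
  intros; push_cast; ring

lemma poch_neg_add_one (z : ℝ) (k : ℕ) :
    poch (-z + 1) k = (-1 : ℝ)^k * poch (z - k) k := by
  have h1 : poch (-z + 1) k = (-1:ℝ)^k * ∏ i ∈ range k, (z - 1 - i) := by
    unfold poch
    have : ∀ i ∈ range k, (-z + 1 + (i:ℝ)) = (-1) * (z - 1 - i) := by intros; ring
    rw [prod_congr rfl this, prod_mul_distrib, prod_const, card_range]
  rw [h1]
  congr 1
  unfold poch
  rw [← prod_range_reflect (fun j => z - (k:ℝ) + j) k]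
  apply prod_congr rfl
  intro i hi
  simp only [mem_range] at hi
  have : ((k - 1 - i : ℕ) : ℝ) = (k : ℝ) - 1 - i := by
    have h : k - 1 - i = k - (1 + i) := by omega
    rw [h, Nat.cast_sub (by omega)]
    push_cast; ring
  rw [this]; ring

lemma gbinom_trinomial (x : ℝ) (a b : ℕ) :
    gbinom x (a + b) * ((a + b).choose a : ℝ) = gbinom x a * gbinom (x - a) b := by
  unfold gbinom
  rw [prod_range_add]
  have hfac : ((a+b).choose a : ℝ) * (a.factorial : ℝ) * (b.factorial : ℝ)
      = ((a+b).factorial : ℝ) := by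
    rw [← Nat.cast_mul, ← Nat.cast_mul]
    congr 1
    have := Nat.choose_mul_factorial_mul_factorial (Nat.le_add_right a b)
    simpa using this
  have h2 : ∀ i ∈ range b, (x - ((a + i : ℕ) : ℝ)) = (x - a - i) := by
    intros; push_cast; ring
  rw [prod_congr rfl h2]
  have ha : (a.factorial : ℝ) ≠ 0 := Nat.cast_ne_zero.2 (Nat.factorial_ne_zero a)
  have hb : (b.factorial : ℝ) ≠ 0 := Nat.cast_ne_zero.2 (Nat.factorial_ne_zero b)
  have hab : ((a+b).factorial : ℝ) ≠ 0 := Nat.cast_ne_zero.2 (Nat.factorial_ne_zero _)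
  field_simp
  linear_combination ((∏ i ∈ range a, (x - (i:ℝ))) * ∏ i ∈ range b, (x - (a:ℝ) - i)) * hfac

lemma gbinom_vandermonde (y z : ℝ) (n : ℕ) :
    gbinom (y + z) n = ∑ k ∈ range (n + 1), gbinom y k * gbinom z (n - k) := by
  induction n with
  | zero => simp [gbinom]
  | succ n ih =>
    have hne : ((n : ℝ) + 1) ≠ 0 := by positivity
    apply mul_left_cancel₀ hne
    rw [gbinom_succ_mul (y + z) n, ih, mul_sum, mul_sum]
    have split : ∀ k ∈ range (n + 2),
        ((n : ℝ) + 1) * (gbinom y k * gbinom z (n + 1 - k))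
          = (k : ℝ) * gbinom y k * gbinom z (n + 1 - k)
            + ((n + 1 - k : ℕ) : ℝ) * gbinom z (n + 1 - k) * gbinom y k := by
      intro k hk
      simp only [mem_range] at hk
      have : ((n + 1 - k : ℕ) : ℝ) = (n : ℝ) + 1 - k := by
        rw [Nat.cast_sub (by omega)]; push_cast; ring
      rw [this]; ring
    rw [sum_congr rfl split, sum_add_distrib]
    have hS1 : ∑ k ∈ range (n + 2),
        (k : ℝ) * gbinom y k * gbinom z (n + 1 - k)
        = ∑ k ∈ range (n + 1), (y - k) * gbinom y k * gbinom z (n - k) := by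
      rw [Finset.sum_range_succ'
        (fun k => (k : ℝ) * gbinom y k * gbinom z (n + 1 - k)) (n + 1)]
      simp only [Nat.cast_zero, zero_mul, add_zero]
      apply sum_congr rfl
      intro i hi
      have h1 : n + 1 - (i + 1) = n - i := by omega
      rw [h1]
      push_cast
      rw [show ((i:ℝ)+1) * gbinom y (i+1) * gbinom z (n-i)
            = (((i:ℝ)+1) * gbinom y (i+1)) * gbinom z (n-i) from by ring,
        gbinom_succ_mul]
    have hS2 : ∑ k ∈ range (n + 2),
        ((n + 1 - k : ℕ) : ℝ) * gbinom z (n + 1 - k) * gbinom y k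
        = ∑ k ∈ range (n + 1), (z - ((n - k : ℕ) : ℝ)) * gbinom z (n - k) * gbinom y k := by
      rw [Finset.sum_range_succ]
      simp only [Nat.sub_self, Nat.cast_zero, zero_mul]
      rw [add_zero]
      apply sum_congr rfl
      intro k hk
      simp only [mem_range] at hk
      have h1 : n + 1 - k = (n - k) + 1 := by omega
      rw [h1]
      push_cast
      rw [show (((n-k:ℕ):ℝ)+1) * gbinom z ((n-k)+1) * gbinom y k
            = ((((n-k:ℕ):ℝ)+1) * gbinom z ((n-k)+1)) * gbinom y k from by ring,
        gbinom_succ_mul]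
    rw [hS1, hS2, ← sum_add_distrib]
    apply sum_congr rfl
    intro k hk
    simp only [mem_range] at hk
    have : ((n - k : ℕ) : ℝ) = (n : ℝ) - k := by
      rw [Nat.cast_sub (by omega)]
    rw [this]
    ring

lemma fwdDiff_gbinom (m : ℕ) :
    fwdDiffOp (fun y => gbinom y (m + 1)) = fun y => gbinom y m := by
  funext y
  unfold fwdDiffOp gbinom
  have h1 : ∏ i ∈ range (m + 1), (y + 1 - i) = (∏ i ∈ range m, (y - i)) * (y + 1) := by
    rw [prod_range_succ']
    simp only [Nat.cast_zero, sub_zero]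
    congr 1
    apply prod_congr rfl
    intros; push_cast; ring
  have h2 : ∏ i ∈ range (m + 1), (y - i) = (∏ i ∈ range m, (y - i)) * (y - m) := by
    rw [prod_range_succ]
  simp only []
  rw [h1, h2, Nat.factorial_succ]
  have hm : (Nat.factorial m : ℝ) ≠ 0 := Nat.cast_ne_zero.2 (Nat.factorial_ne_zero m)
  have hm1 : ((m : ℝ) + 1) ≠ 0 := by positivity
  push_cast
  field_simp
  ring

lemma iter_fwdDiff_gbinom (m k : ℕ) :
    fwdDiffOp^[m] (fun y => gbinom y (m + k)) = fun y => gbinom y k := by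
  induction m with
  | zero => simp
  | succ m ih =>
    rw [Function.iterate_succ_apply]
    rw [show (m + 1 + k) = (m + k) + 1 from by omega, fwdDiff_gbinom (m + k), ih]

lemma fwdDiff_sum {ι : Type*} (s : Finset ι) (f : ι → ℝ → ℝ) :
    fwdDiffOp (fun x => ∑ i ∈ s, f i x) = fun x => ∑ i ∈ s, fwdDiffOp (f i) x := by
  funext x
  simp [fwdDiffOp, Finset.sum_sub_distrib]

lemma iter_fwdDiff_sum {ι : Type*} (m : ℕ) (s : Finset ι) (f : ι → ℝ → ℝ) :
    fwdDiffOp^[m] (fun x => ∑ i ∈ s, f i x) = fun x => ∑ i ∈ s, fwdDiffOp^[m] (f i) x := by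
  induction m generalizing f with
  | zero => simp
  | succ m ih =>
    rw [Function.iterate_succ_apply, fwdDiff_sum, ih (fun i => fwdDiffOp (f i))]
    simp [Function.iterate_succ_apply]

lemma fwdDiff_const_mul (c : ℝ) (f : ℝ → ℝ) :
    fwdDiffOp (fun x => c * f x) = fun x => c * fwdDiffOp f x := by
  funext x
  simp [fwdDiffOp, mul_sub]

lemma iter_fwdDiff_const_mul (m : ℕ) (c : ℝ) (f : ℝ → ℝ) :
    fwdDiffOp^[m] (fun x => c * f x) = fun x => c * fwdDiffOp^[m] f x := by
  induction m generalizing f with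
  | zero => simp
  | succ m ih =>
    rw [Function.iterate_succ_apply, fwdDiff_const_mul, ih (fwdDiffOp f)]
    simp [Function.iterate_succ_apply]

/-! ### derived closed forms -/

lemma neg_one_sq_pow (k : ℕ) : ((-1:ℝ))^k * (-1:ℝ)^k = 1 := by
  rw [← pow_add, ← two_mul, pow_mul]
  norm_num

lemma neg_one_pow_mul_two (k : ℕ) : ((-1:ℝ))^(k*2) = 1 := by
  rw [mul_comm, pow_mul]
  norm_num

lemma poch_neg_nat (n k : ℕ) (hk : k ≤ n) :
    poch (-(n:ℝ)) k = (-1:ℝ)^k * ((n.factorial : ℝ) / ((n - k).factorial : ℝ)) := by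
  have h := prod_range_nat_sub_mul_fact n k hk
  rw [prod_sub_eq_poch_neg (n:ℝ) k] at h
  have hfnk : (((n-k).factorial : ℕ) : ℝ) ≠ 0 := Nat.cast_ne_zero.2 (Nat.factorial_ne_zero _)
  have e8 := neg_one_sq_pow k
  have e9 := neg_one_pow_mul_two k
  field_simp
  linear_combination (-1:ℝ)^k * h + (poch (-(n:ℝ)) k * (((n-k).factorial : ℕ) : ℝ)) * e8
    + (-2 * poch (-(n:ℝ)) k * (((n-k).factorial : ℕ) : ℝ)) * e9

lemma poch_cast_add_one_div (n k : ℕ) :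
    poch ((n:ℝ) + 1) k = ((n+k).factorial : ℝ) / (n.factorial : ℝ) := by
  have h := poch_cast_add_one_mul_fact n k
  have hfn : ((n.factorial : ℕ) : ℝ) ≠ 0 := Nat.cast_ne_zero.2 (Nat.factorial_ne_zero _)
  field_simp
  linear_combination h

lemma gbinom_cast_sub (n N k : ℕ) (hk : k ≤ n) :
    gbinom ((n:ℝ) - N) (n - k)
      = (-1:ℝ)^n * (-1:ℝ)^k * poch ((N:ℝ) - n) (n - k) / (((n-k).factorial : ℕ) : ℝ) := by
  unfold gbinom
  rw [prod_sub_eq_poch_neg ((n:ℝ) - N) (n - k), neg_sub]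
  have e8 := neg_one_sq_pow k
  have hadd : (-1:ℝ)^(n-k) * (-1:ℝ)^k = (-1:ℝ)^n := by
    rw [← pow_add, Nat.sub_add_cancel hk]
  have hsign : (-1:ℝ)^(n-k) = (-1:ℝ)^n * (-1:ℝ)^k := by
    calc (-1:ℝ)^(n-k) = (-1:ℝ)^(n-k) * ((-1:ℝ)^k * (-1:ℝ)^k) := by rw [e8]; ring
    _ = (-1:ℝ)^n * (-1:ℝ)^k := by rw [← mul_assoc, hadd]
  rw [hsign]

/-! ### the main theorem -/

/-- The iterated-forward-difference definition of the discrete Chebyshev polynomial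
coincides with its hypergeometric-sum representation:
`n! Δ^n[ C(x,n) C(x-N,n) ] = (-1)^n (N-n)_n ∑_{k=0}^n ((-n)_k (-x)_k (n+1)_k)/((-N+1)_k (k!)^2)`. -/
theorem discreteChebyshev_fwdDiff_eq_sum (n N : ℕ) (h1 : 1 ≤ n) (h2 : n + 1 ≤ N) (x : ℝ) :
    (Nat.factorial n : ℝ) *
        (fwdDiffOp^[n] (fun y => gbinom y n * gbinom (y - (N : ℝ)) n)) x =
      (-1 : ℝ) ^ n * poch ((N : ℝ) - n) n *
        ∑ k ∈ Finset.range (n + 1),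
          poch (-(n : ℝ)) k * poch (-x) k * poch ((n : ℝ) + 1) k /
            (poch (-(N : ℝ) + 1) k * ((Nat.factorial k : ℝ)) ^ 2) := by
  -- Newton-basis expansion of the product of binomial coefficients
  have hF : (fun y => gbinom y n * gbinom (y - (N:ℝ)) n)
      = fun y => ∑ k ∈ range (n + 1),
          (((n+k).choose n : ℝ) * gbinom ((n:ℝ) - N) (n - k)) * gbinom y (n + k) := by
    funext y
    have hy : y - (N:ℝ) = (y - n) + ((n:ℝ) - N) := by ring
    rw [hy, gbinom_vandermonde (y - n) ((n:ℝ) - N) n, mul_sum]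
    refine sum_congr rfl fun k hk => ?_
    have ht := gbinom_trinomial y n k
    linear_combination (- gbinom ((n:ℝ) - N) (n - k)) * ht
  rw [hF,
    iter_fwdDiff_sum n (range (n+1))
      (fun k y => (((n+k).choose n : ℝ) * gbinom ((n:ℝ) - N) (n - k)) * gbinom y (n + k))]
  simp only []
  rw [mul_sum, mul_sum]
  refine sum_congr rfl fun k hk => ?_
  simp only [mem_range] at hk
  have hkn : k ≤ n := by omega
  rw [iter_fwdDiff_const_mul n _ (fun y => gbinom y (n + k)), iter_fwdDiff_gbinom n k]
  -- now match the coefficients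
  have hB : (0:ℝ) < poch ((N:ℝ) - k) k := by
    apply prod_pos
    intro i hi
    have hkN : (k:ℝ) < N := by exact_mod_cast (by omega : k < N)
    have hi0 : (0:ℝ) ≤ i := Nat.cast_nonneg i
    linarith
  have hBne : poch ((N:ℝ) - k) k ≠ 0 := ne_of_gt hB
  have e4 : poch (-(N:ℝ) + 1) k = (-1:ℝ)^k * poch ((N:ℝ) - k) k := poch_neg_add_one (N:ℝ) k
  have e5 : poch ((N:ℝ) - n) n = poch ((N:ℝ) - n) (n - k) * poch ((N:ℝ) - k) k := by
    have h := poch_add ((N:ℝ) - n) (n - k) k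
    rw [show (n - k) + k = n from by omega] at h
    rw [h]
    congr 2
    rw [Nat.cast_sub hkn]
    ring
  have e2 : poch (-(n:ℝ)) k
      = (-1:ℝ)^k * ((n.factorial : ℝ) / ((n - k).factorial : ℝ)) := poch_neg_nat n k hkn
  have e3 : poch ((n:ℝ) + 1) k = ((n+k).factorial : ℝ) / (n.factorial : ℝ) :=
    poch_cast_add_one_div n k
  have e1 : gbinom ((n:ℝ) - N) (n - k)
      = (-1:ℝ)^n * (-1:ℝ)^k * poch ((N:ℝ) - n) (n - k) / (((n-k).factorial : ℕ) : ℝ) :=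
    gbinom_cast_sub n N k hkn
  have ex : poch (-x) k = (-1:ℝ)^k * ((k.factorial : ℝ) * gbinom x k) := by
    have h := prod_sub_eq_poch_neg x k
    have e8 := neg_one_sq_pow k
    have hfk : ((k.factorial : ℕ) : ℝ) ≠ 0 := Nat.cast_ne_zero.2 (Nat.factorial_ne_zero _)
    unfold gbinom
    have e9 := neg_one_pow_mul_two k
    field_simp
    linear_combination (-1:ℝ)^k * h.symm + poch (-x) k * e8 + (-2 * poch (-x) k) * e9
  have hC : ((n+k).choose n : ℝ) * (n.factorial : ℝ) * (k.factorial : ℝ)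
      = ((n+k).factorial : ℝ) := by
    rw [← Nat.cast_mul, ← Nat.cast_mul]
    congr 1
    have := Nat.choose_mul_factorial_mul_factorial (Nat.le_add_right n k)
    simpa using this
  have hfn : ((n.factorial : ℕ) : ℝ) ≠ 0 := Nat.cast_ne_zero.2 (Nat.factorial_ne_zero _)
  have hfk : ((k.factorial : ℕ) : ℝ) ≠ 0 := Nat.cast_ne_zero.2 (Nat.factorial_ne_zero _)
  have hfnk : (((n-k).factorial : ℕ) : ℝ) ≠ 0 := Nat.cast_ne_zero.2 (Nat.factorial_ne_zero _)
  have e8 := neg_one_sq_pow k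
  rw [e1, e2, e3, e4, e5, ex]
  field_simp
  linear_combination (poch ((N:ℝ) - n) (n - k) * gbinom x k) * hC
end

section
/- For all integers n, m, N with 0 ≤ n ≤ N-1, 0 ≤ m ≤ N-1 and n ≠ m, the discrete Chebyshev polynomials are orthogonal with respect to the counting measure on {0, 1, …, N-1}: ∑_{x=0}^{N-1} t_n(x,N) · t_m(x,N) = 0. -/
open Finset

/-- Discrete Chebyshev polynomial `t_n(x, N)` for `0 ≤ n ≤ N-1`:
`t_n(x, N) = (-1)^n (N-n)_n ∑_{k=0}^n ((-n)_k (-x)_k (n+1)_k)/((-N+1)_k (k!)^2)`. -/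
noncomputable def tchebN (n N : ℕ) (x : ℝ) : ℝ :=
  (-1 : ℝ) ^ n * poch ((N : ℝ) - n) n *
    ∑ k ∈ Finset.range (n + 1),
      poch (-(n : ℝ)) k * poch (-x) k * poch ((n : ℝ) + 1) k /
        (poch (-(N : ℝ) + 1) k * ((Nat.factorial k : ℝ)) ^ 2)

open Polynomial

lemma desc_eq (y k : ℕ) : ∏ i ∈ Finset.range k, ((y:ℝ) - i) = k.factorial * y.choose k := by
  induction k with
  | zero => simp
  | succ k ih =>
    rw [Finset.prod_range_succ, ih]
    rcases le_or_gt (k+1) y with h | h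
    · have hnat : (k+1).factorial * y.choose (k+1) = k.factorial * y.choose k * (y - k) := by
        rw [Nat.factorial_succ, mul_assoc, mul_comm (k+1), mul_assoc, Nat.choose_succ_right_eq]
        ring
      have hy : ((y - k : ℕ) : ℝ) = (y:ℝ) - k := by
        have : k ≤ y := by omega
        push_cast [this]; ring
      rw [← hy]
      exact_mod_cast congrArg (Nat.cast (R := ℝ)) hnat.symm
    · rw [Nat.choose_eq_zero_of_lt h]
      rcases lt_or_eq_of_le (by omega : y ≤ k) with h2 | h2
      · rw [Nat.choose_eq_zero_of_lt h2]; simp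
      · subst h2; simp

lemma poch_neg_nat_s2 (y k : ℕ) : poch (-(y:ℝ)) k = (-1)^k * (k.factorial * y.choose k) := by
  have : ∀ i ∈ Finset.range k, (-(y:ℝ) + i) = (-1) * ((y:ℝ) - i) := by intros; ring
  rw [poch, Finset.prod_congr rfl this, Finset.prod_mul_distrib, Finset.prod_const, desc_eq]
  simp

lemma asc_eq (a b : ℕ) : (a.factorial : ℝ) * ∏ i ∈ Finset.range b, ((a:ℝ) + 1 + i) = (a+b).factorial := by
  induction b with
  | zero => simp
  | succ b ih =>
    rw [Finset.prod_range_succ, ← mul_assoc, ih, show a + (b+1) = (a+b) + 1 by ring,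
      Nat.factorial_succ]
    push_cast; ring

lemma poch_pos_nat (a k : ℕ) : poch ((a:ℝ) + 1) k = (a+k).factorial / a.factorial := by
  rw [eq_div_iff (by exact_mod_cast a.factorial_ne_zero), poch, mul_comm, asc_eq]

/-- dual Vandermonde / hockey-stick convolution -/
lemma vdm (N : ℕ) : ∀ j k : ℕ, ∑ x ∈ Finset.range N, x.choose k * (N - 1 - x).choose j
    = N.choose (k+j+1) := by
  induction N with
  | zero => intro j k; simp
  | succ N ih =>
    intro j k
    rw [Finset.sum_range_succ]
    have hsub : ∀ x, N + 1 - 1 - x = N - x := by omega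
    simp only [hsub]
    cases j with
    | zero =>
      have base : ∑ x ∈ Finset.range N, x.choose k * (N - 1 - x).choose 0 = N.choose (k+1) := by
        simpa using ih 0 k
      simp only [Nat.choose_zero_right, mul_one] at base ⊢
      rw [show k+0+1 = k+1 by ring, Nat.choose_succ_succ, base]
      simp only [Nat.succ_eq_add_one]
      omega
    | succ j =>
      rw [Nat.sub_self, Nat.choose_eq_zero_of_lt (by omega : 0 < j + 1), mul_zero, add_zero]
      have hsplit : ∀ x ∈ Finset.range N, x.choose k * (N - x).choose (j+1)
          = x.choose k * (N - 1 - x).choose (j+1) + x.choose k * (N - 1 - x).choose j := by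
        intro x hx
        rw [Finset.mem_range] at hx
        rw [show N - x = (N - 1 - x) + 1 by omega, Nat.choose_succ_succ]
        ring
      rw [Finset.sum_congr rfl hsplit, Finset.sum_add_distrib, ih (j+1) k, ih j k,
        show k + (j+1) + 1 = (k + j + 1) + 1 by ring, Nat.choose_succ_succ]
      simp only [Nat.succ_eq_add_one]
      omega

lemma deg_drop (p : ℝ[X]) (hp : p ≠ 0) :
    p.comp (X + C 1) - p = 0 ∨ (p.comp (X + C 1) - p).natDegree < p.natDegree := by
  by_cases hq : p.comp (X + C 1) - p = 0
  · exact Or.inl hq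
  right
  have h1 : (X + C 1 : ℝ[X]).natDegree = 1 := natDegree_X_add_C 1
  have hl : (p.comp (X + C 1)).leadingCoeff = p.leadingCoeff := by
    rw [leadingCoeff_comp (by rw [h1]; norm_num), leadingCoeff_X_add_C, one_pow, mul_one]
  have hc : p.comp (X + C 1) ≠ 0 := by
    intro h
    rw [h, leadingCoeff_zero] at hl
    exact hp (leadingCoeff_eq_zero.mp hl.symm)
  have hd : (p.comp (X + C 1)).degree = p.degree := by
    rw [degree_eq_natDegree hc, degree_eq_natDegree hp, natDegree_comp, h1, mul_one]
  have h2 : (p.comp (X + C 1) - p).degree < p.degree := by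
    have := degree_sub_lt hd hc hl
    rwa [hd] at this
  exact natDegree_lt_natDegree hq h2

lemma alt_sum_poly (n : ℕ) : ∀ p : ℝ[X], p.natDegree < n →
    ∑ k ∈ Finset.range (n+1), (-1:ℝ)^k * (n.choose k) * p.eval (k:ℝ) = 0 := by
  induction n with
  | zero => intro p hp; omega
  | succ n ih =>
    intro p hp
    by_cases hp0 : p = 0
    · simp [hp0]
    have step : ∀ k ∈ Finset.range (n+2), (-1:ℝ)^k * ((n+1).choose k) * p.eval (k:ℝ)
        = (-1:ℝ)^k * (n.choose k) * p.eval (k:ℝ)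
          + (if k = 0 then 0 else (-1:ℝ)^k * (n.choose (k-1)) * p.eval (k:ℝ)) := by
      intro k _
      cases k with
      | zero => simp
      | succ k =>
        simp only [Nat.choose_succ_succ n k, if_neg (Nat.succ_ne_zero k)]
        push_cast
        ring
    rw [Finset.sum_congr rfl step, Finset.sum_add_distrib]
    have e1 : ∑ k ∈ Finset.range (n+2), (-1:ℝ)^k * (n.choose k) * p.eval (k:ℝ)
        = ∑ k ∈ Finset.range (n+1), (-1:ℝ)^k * (n.choose k) * p.eval (k:ℝ) := by
      rw [Finset.sum_range_succ, Nat.choose_eq_zero_of_lt (by omega)]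
      simp
    have e2 : ∑ k ∈ Finset.range (n+2),
          (if k = 0 then 0 else (-1:ℝ)^k * (n.choose (k-1)) * p.eval (k:ℝ))
        = ∑ k ∈ Finset.range (n+1),
            -((-1:ℝ)^k * (n.choose k) * (p.comp (X + C 1)).eval (k:ℝ)) := by
      rw [Finset.sum_range_succ']
      simp only [Nat.succ_ne_zero, if_false, if_true, Nat.add_sub_cancel, reduceIte, add_zero]
      apply Finset.sum_congr rfl
      intro k _
      rw [eval_comp]
      push_cast
      simp only [eval_add, eval_X, eval_C, pow_succ]
      ring
    rw [e1, e2, Finset.sum_neg_distrib]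
    set q := p.comp (X + C 1) - p with hqdef
    have key : ∑ k ∈ Finset.range (n+1), (-1:ℝ)^k * (n.choose k) * p.eval (k:ℝ)
        - ∑ k ∈ Finset.range (n+1), (-1:ℝ)^k * (n.choose k) * (p.comp (X + C 1)).eval (k:ℝ)
        = - ∑ k ∈ Finset.range (n+1), (-1:ℝ)^k * (n.choose k) * q.eval (k:ℝ) := by
      rw [← Finset.sum_sub_distrib, ← Finset.sum_neg_distrib]
      apply Finset.sum_congr rfl
      intro k _
      rw [hqdef, eval_sub]
      ring
    rw [sub_eq_add_neg] at key
    rw [key]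
    rcases deg_drop p hp0 with h | h
    · rw [hqdef, h]; simp
    · rw [← hqdef] at h
      rw [ih q (by omega)]
      simp

lemma key (n N j : ℕ) (hn : n + 1 ≤ N) (hj : j < n) :
    ∑ x ∈ Finset.range N, tchebN n N (x:ℝ) * (∏ i ∈ Finset.range j, ((N:ℝ) - 1 - i - x)) = 0 := by
  set A : ℝ := (-1 : ℝ) ^ n * poch ((N : ℝ) - n) n with hA
  set w : ℕ → ℝ := fun k => poch (-(n : ℝ)) k * poch ((n : ℝ) + 1) k /
        (poch (-(N : ℝ) + 1) k * ((Nat.factorial k : ℝ)) ^ 2) with hw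
  -- the polynomial G
  set G : ℝ[X] := (∏ i ∈ Finset.range (n-j-1), (X + C ((j:ℝ)+2+i))) *
      (∏ i ∈ Finset.range j, (C ((N:ℝ)-1-i) - X)) with hG
  -- Step 1: expand and swap sums
  have expand : ∀ x : ℕ, tchebN n N (x:ℝ) * (∏ i ∈ Finset.range j, ((N:ℝ) - 1 - i - x))
      = A * ∑ k ∈ Finset.range (n+1),
          w k * (poch (-(x:ℝ)) k * (∏ i ∈ Finset.range j, ((N:ℝ) - 1 - i - x))) := by
    intro x
    rw [tchebN, ← hA, mul_assoc, Finset.sum_mul]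
    congr 1
    apply Finset.sum_congr rfl
    intro k _
    rw [hw]
    ring
  rw [Finset.sum_congr rfl (fun x _ => expand x), ← Finset.mul_sum, Finset.sum_comm]
  -- Step 2: inner sums
  have inner : ∀ k ∈ Finset.range (n+1),
      ∑ x ∈ Finset.range N, w k * (poch (-(x:ℝ)) k * (∏ i ∈ Finset.range j, ((N:ℝ) - 1 - i - x)))
      = w k * ((-1:ℝ)^k * k.factorial * j.factorial * (N.choose (k+j+1) : ℝ)) := by
    intro k _
    rw [← Finset.mul_sum]
    congr 1
    have per : ∀ x ∈ Finset.range N,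
        poch (-(x:ℝ)) k * (∏ i ∈ Finset.range j, ((N:ℝ) - 1 - i - x))
        = ((-1:ℝ)^k * k.factorial * j.factorial) * ((x.choose k * (N-1-x).choose j : ℕ) : ℝ) := by
      intro x hx
      rw [Finset.mem_range] at hx
      have hcast : ((N - 1 - x : ℕ) : ℝ) = (N:ℝ) - 1 - x := by
        rw [Nat.cast_sub (by omega : x ≤ N - 1), Nat.cast_sub (by omega : 1 ≤ N)]
        push_cast; ring
      have hprod : (∏ i ∈ Finset.range j, ((N:ℝ) - 1 - i - x))
          = j.factorial * ((N-1-x).choose j : ℝ) := by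
        rw [← desc_eq (N-1-x) j]
        apply Finset.prod_congr rfl
        intro i _
        rw [hcast]; ring
      rw [hprod, poch_neg_nat_s2]
      push_cast
      ring
    rw [Finset.sum_congr rfl per, ← Finset.mul_sum, ← Nat.cast_sum, vdm N j k]
  rw [Finset.sum_congr rfl inner]
  -- Step 3: per-k identity
  have claim1 : ∀ k ∈ Finset.range (n+1),
      w k * ((-1:ℝ)^k * k.factorial * j.factorial * (N.choose (k+j+1) : ℝ))
      = ((j.factorial * N) / n.factorial) * ((-1:ℝ)^k * (n.choose k) * G.eval (k:ℝ)) := by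
    intro k hk
    rw [Finset.mem_range] at hk
    have hkn : k ≤ n := by omega
    have hkN1 : k ≤ N - 1 := by omega
    have h1N : 1 ≤ N := by omega
    have h3 : poch (-(N:ℝ)+1) k = (-1:ℝ)^k * (k.factorial * ((N-1).choose k : ℝ)) := by
      rw [show -(N:ℝ)+1 = -((N-1 : ℕ):ℝ) by rw [Nat.cast_sub h1N]; push_cast; ring]
      exact poch_neg_nat_s2 (N-1) k
    have hGev : G.eval (k:ℝ) = (∏ i ∈ Finset.range (n-j-1), ((k:ℝ)+((j:ℝ)+2+i))) *
        (∏ i ∈ Finset.range j, ((N:ℝ)-1-i-k)) := by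
      rw [hG]
      simp [eval_prod]
    have hE1 : (∏ i ∈ Finset.range (n-j-1), ((k:ℝ)+((j:ℝ)+2+i)))
        = (n+k).factorial / (k+j+1).factorial := by
      have h := poch_pos_nat (k+j+1) (n-j-1)
      rw [show k+j+1 + (n-j-1) = n+k by omega] at h
      rw [← h, poch]
      apply Finset.prod_congr rfl
      intro i _
      push_cast; ring
    simp only [hw]
    rw [poch_neg_nat_s2 n k, poch_pos_nat n k, h3, hGev, hE1]
    have hfacne : ∀ m : ℕ, (m.factorial : ℝ) ≠ 0 :=
      fun m => Nat.cast_ne_zero.mpr (Nat.factorial_ne_zero m)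
    by_cases hc : k + j + 1 ≤ N
    · -- main case
      have hE2 : (∏ i ∈ Finset.range j, ((N:ℝ)-1-i-k))
          = (N-1-k).factorial / (N-1-k-j).factorial := by
        have hcast : ((N - 1 - k : ℕ) : ℝ) = (N:ℝ) - 1 - k := by
          rw [Nat.cast_sub (by omega : k ≤ N - 1), Nat.cast_sub h1N]
          push_cast; ring
        have h := desc_eq (N-1-k) j
        have h2 : (∏ i ∈ Finset.range j, ((N:ℝ)-1-i-k))
            = j.factorial * ((N-1-k).choose j : ℝ) := by
          rw [← h]
          apply Finset.prod_congr rfl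
          intro i _
          rw [hcast]; ring
        rw [h2, Nat.cast_choose ℝ (by omega : j ≤ N - 1 - k)]
        have := hfacne j
        field_simp
      have hC1 : (N.choose (k+j+1) : ℝ) = N.factorial / ((k+j+1).factorial * (N-1-k-j).factorial) := by
        rw [Nat.cast_choose ℝ hc, show N - (k+j+1) = N-1-k-j by omega]
      have hC2 : (((N-1).choose k) : ℝ) = (N-1).factorial / (k.factorial * (N-1-k).factorial) := by
        rw [Nat.cast_choose ℝ hkN1]
      have hNf : (N.factorial : ℝ) = N * ((N-1).factorial) := by
        obtain ⟨m, rfl⟩ : ∃ m, N = m + 1 := ⟨N-1, by omega⟩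
        simp [Nat.factorial_succ]
        try push_cast
        try ring
      rw [hE2, hC1, hC2, hNf]
      have hN0 : (N:ℝ) ≠ 0 := Nat.cast_ne_zero.mpr (by omega)
      have e1 := hfacne n
      have e2 := hfacne k
      have e3 := hfacne (k+j+1)
      have e4 := hfacne (N-1)
      have e5 := hfacne (N-1-k)
      have e6 := hfacne (N-1-k-j)
      have e7 := hfacne j
      field_simp
    · -- vanishing case
      rw [Nat.choose_eq_zero_of_lt (by omega : N < k+j+1)]
      have hE2 : (∏ i ∈ Finset.range j, ((N:ℝ)-1-i-k)) = 0 := by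
        apply Finset.prod_eq_zero (Finset.mem_range.mpr (by omega : N-1-k < j))
        rw [Nat.cast_sub (by omega : k ≤ N - 1), Nat.cast_sub h1N]
        push_cast; ring
      rw [hE2]
      simp
  rw [Finset.sum_congr rfl claim1, ← Finset.mul_sum]
  -- Step 4: apply alt_sum_poly
  have hdeg : G.natDegree < n := by
    have hb1 : (∏ i ∈ Finset.range (n-j-1), (X + C ((j:ℝ)+2+i))).natDegree ≤ n-j-1 := by
      refine le_trans (Polynomial.natDegree_prod_le _ _) ?_
      refine le_trans (Finset.sum_le_card_nsmul _ _ 1 ?_) (by simp)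
      intro i _
      exact le_of_eq (Polynomial.natDegree_X_add_C _)
    have hb2 : (∏ i ∈ Finset.range j, (C ((N:ℝ)-1-i) - X)).natDegree ≤ j := by
      refine le_trans (Polynomial.natDegree_prod_le _ _) ?_
      refine le_trans (Finset.sum_le_card_nsmul _ _ 1 ?_) (by simp)
      intro i _
      rw [show (C ((N:ℝ)-1-i) - X) = -(X - C ((N:ℝ)-1-i)) by ring, Polynomial.natDegree_neg,
        Polynomial.natDegree_X_sub_C]
    have := Polynomial.natDegree_mul_le (p := (∏ i ∈ Finset.range (n-j-1), (X + C ((j:ℝ)+2+i))))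
      (q := (∏ i ∈ Finset.range j, (C ((N:ℝ)-1-i) - X)))
    rw [← hG] at this
    omega
  rw [alt_sum_poly n G hdeg]
  ring

lemma ortho_poly (n N : ℕ) (hn : n + 1 ≤ N) :
    ∀ d : ℕ, d < n → ∀ p : ℝ[X], p.natDegree = d →
      ∑ x ∈ Finset.range N, tchebN n N (x:ℝ) * p.eval (x:ℝ) = 0 := by
  intro d
  induction d using Nat.strong_induction_on with
  | _ d ih =>
    intro hd p hp
    by_cases hp0 : p = 0
    · simp [hp0]
    set Q : ℝ[X] := ∏ i ∈ Finset.range d, (C ((N:ℝ)-1-i) - X) with hQ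
    have hfac : ∀ i : ℕ, (C ((N:ℝ)-1-i) - X) = -(X - C ((N:ℝ)-1-i)) := by intro i; ring
    have hQl : Q.leadingCoeff = (-1:ℝ)^d := by
      rw [hQ, Polynomial.leadingCoeff_prod]
      have : ∀ i ∈ Finset.range d, (C ((N:ℝ)-1-i) - X).leadingCoeff = -1 := by
        intro i _
        rw [hfac i, Polynomial.leadingCoeff_neg, Polynomial.leadingCoeff_X_sub_C]
      rw [Finset.prod_congr rfl this, Finset.prod_const]
      simp
    have hQd : Q.degree = d := by
      rw [hQ, Polynomial.degree_prod]
      have : ∀ i ∈ Finset.range d, (C ((N:ℝ)-1-i) - X).degree = 1 := by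
        intro i _
        rw [hfac i, Polynomial.degree_neg, Polynomial.degree_X_sub_C]
      rw [Finset.sum_congr rfl this]
      simp
    have hLQ : ∑ x ∈ Finset.range N, tchebN n N (x:ℝ) * Q.eval (x:ℝ) = 0 := by
      have hQev : ∀ x : ℝ, Q.eval x = ∏ i ∈ Finset.range d, ((N:ℝ)-1-i-x) := by
        intro x
        rw [hQ, Polynomial.eval_prod]
        apply Finset.prod_congr rfl
        intro i _
        simp
      rw [Finset.sum_congr rfl (fun x _ => by rw [hQev (x:ℝ)])]
      exact key n N d hn hd
    set c : ℝ := p.leadingCoeff * (-1:ℝ)^d with hc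
    set q : ℝ[X] := p - C c * Q with hq
    have hlcp : p.leadingCoeff ≠ 0 := Polynomial.leadingCoeff_ne_zero.mpr hp0
    have hcne : c ≠ 0 := by
      rw [hc]
      exact mul_ne_zero hlcp (by positivity)
    have hcQl : (C c * Q).leadingCoeff = p.leadingCoeff := by
      rw [Polynomial.leadingCoeff_mul, Polynomial.leadingCoeff_C, hQl, hc, mul_assoc, ← pow_add,
        show d + d = 2*d by ring, pow_mul]
      norm_num
    have hCcQ_ne : C c * Q ≠ 0 := by
      intro h
      rw [h, Polynomial.leadingCoeff_zero] at hcQl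
      exact hlcp hcQl.symm
    have hdeg_eq : p.degree = (C c * Q).degree := by
      rw [Polynomial.degree_mul, Polynomial.degree_C hcne, hQd,
        Polynomial.degree_eq_natDegree hp0, hp]
      simp
    have hsplit : ∑ x ∈ Finset.range N, tchebN n N (x:ℝ) * p.eval (x:ℝ)
        = (∑ x ∈ Finset.range N, tchebN n N (x:ℝ) * q.eval (x:ℝ))
          + c * ∑ x ∈ Finset.range N, tchebN n N (x:ℝ) * Q.eval (x:ℝ) := by
      rw [Finset.mul_sum, ← Finset.sum_add_distrib]
      apply Finset.sum_congr rfl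
      intro x _
      have : p.eval (x:ℝ) = q.eval (x:ℝ) + c * Q.eval (x:ℝ) := by
        rw [hq]
        simp only [Polynomial.eval_sub, Polynomial.eval_mul, Polynomial.eval_C]
        ring
      rw [this]
      ring
    rw [hsplit, hLQ, mul_zero, add_zero]
    by_cases hq0 : q = 0
    · simp [hq0]
    · have hdlt : q.degree < p.degree := by
        rw [hq]
        exact Polynomial.degree_sub_lt hdeg_eq hp0 hcQl.symm
      have hnd : q.natDegree < d := by
        rw [← hp]
        exact Polynomial.natDegree_lt_natDegree hq0 hdlt
      exact ih q.natDegree hnd (by omega) q rfl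

lemma tcheb_poly (m N : ℕ) : ∃ p : ℝ[X], p.natDegree ≤ m ∧ ∀ x : ℝ, tchebN m N x = p.eval x := by
  refine ⟨C ((-1:ℝ)^m * poch ((N:ℝ) - m) m) * ∑ k ∈ Finset.range (m+1),
    C (poch (-(m:ℝ)) k * poch ((m:ℝ)+1) k / (poch (-(N:ℝ)+1) k * ((Nat.factorial k:ℝ))^2)) *
      ∏ i ∈ Finset.range k, (C (i:ℝ) - X), ?_, ?_⟩
  · refine le_trans (Polynomial.natDegree_mul_le) ?_
    rw [Polynomial.natDegree_C, zero_add]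
    apply Polynomial.natDegree_sum_le_of_forall_le
    intro k hk
    refine le_trans (Polynomial.natDegree_mul_le) ?_
    rw [Polynomial.natDegree_C, zero_add]
    refine le_trans (Polynomial.natDegree_prod_le _ _) ?_
    refine le_trans (Finset.sum_le_card_nsmul _ _ 1 ?_) ?_
    · intro i _
      rw [show (C ((i:ℕ):ℝ) - X) = -(X - C ((i:ℕ):ℝ)) by ring, Polynomial.natDegree_neg,
        Polynomial.natDegree_X_sub_C]
    · simp only [Finset.card_range, smul_eq_mul, mul_one]
      rw [Finset.mem_range] at hk
      omega
  · intro x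
    rw [tchebN]
    rw [Polynomial.eval_mul, Polynomial.eval_C, Polynomial.eval_finset_sum]
    congr 1
    apply Finset.sum_congr rfl
    intro k _
    rw [Polynomial.eval_mul, Polynomial.eval_C, Polynomial.eval_prod]
    have : poch (-x) k = ∏ i ∈ Finset.range k, (((i:ℕ):ℝ) - x) := by
      rw [poch]
      apply Finset.prod_congr rfl
      intro i _
      ring
    rw [this]
    have : ∀ i ∈ Finset.range k, Polynomial.eval x (C ((i:ℕ):ℝ) - X) = ((i:ℕ):ℝ) - x := by
      intro i _
      simp
    rw [Finset.prod_congr rfl this]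
    ring

lemma orth_aux (n m N : ℕ) (hn : n + 1 ≤ N) (hlt : m < n) :
    ∑ x ∈ Finset.range N, tchebN n N (x : ℝ) * tchebN m N (x : ℝ) = 0 := by
  obtain ⟨p, hdeg, hev⟩ := tcheb_poly m N
  have h := ortho_poly n N hn p.natDegree (by omega) p rfl
  rw [← h]
  apply Finset.sum_congr rfl
  intro x _
  rw [hev]

/-- Orthogonality of the discrete Chebyshev polynomials with respect to the
counting measure on `{0, 1, …, N-1}`. -/
theorem tchebN_orthogonal (n m N : ℕ) (hn : n + 1 ≤ N) (hm : m + 1 ≤ N) (hnm : n ≠ m) :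
    ∑ x ∈ Finset.range N, tchebN n N (x : ℝ) * tchebN m N (x : ℝ) = 0 := by
  rcases lt_or_gt_of_ne hnm with h | h
  · rw [show (∑ x ∈ Finset.range N, tchebN n N (x:ℝ) * tchebN m N (x:ℝ))
        = ∑ x ∈ Finset.range N, tchebN m N (x:ℝ) * tchebN n N (x:ℝ) from
      Finset.sum_congr rfl fun x _ => mul_comm _ _]
    exact orth_aux m n N hm h
  · exact orth_aux n m N hn h
end

section
/- Let a, b be real numbers with 0 < b < 1, a ≠ 1, and b^2 - 4a + 4a^2 ≥ 0, and set D = √(b^2 - 4a + 4a^2), w_± = (b ± D)/(2b), t_± = (2 - 2a - b^2 ± bD)/(2(1-a)(1+b)). Then, provided the denominators involved are nonzero (i.e. t_± ∉ {0,1}, w_± ∉ {0,1}, and 1 - (1 - t_±)w_± ≠ 0), each pair (t, w) = (t_+, w_+) and (t, w) = (t_-, w_-) satisfies the two saddle-point equations -b/(1-t) + (1-b)/t + b·w/(1-(1-t)w) = 0 and a/w - a/(w-1) - b·(1-t)/(1-(1-t)w) = 0. -/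
lemma aux (a b D t w : ℝ)
    (hb0 : 0 < b) (hb1 : b < 1) (ha1 : a ≠ 1)
    (hD2 : D ^ 2 = b ^ 2 - 4 * a + 4 * a ^ 2)
    (hw : w = (b + D) / (2 * b))
    (ht : t = (2 - 2 * a - b ^ 2 + b * D) / (2 * (1 - a) * (1 + b)))
    (h1 : t ≠ 0) (h2 : t ≠ 1) (h5 : w ≠ 0) (h6 : w ≠ 1)
    (h9 : 1 - (1 - t) * w ≠ 0) :
    -b / (1 - t) + (1 - b) / t + b * w / (1 - (1 - t) * w) = 0 ∧
      a / w - a / (w - 1) - b * (1 - t) / (1 - (1 - t) * w) = 0 := by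
  have hbne : b ≠ 0 := hb0.ne'
  have ha : (1 : ℝ) - a ≠ 0 := sub_ne_zero.mpr (Ne.symm ha1)
  have hb1' : (1 : ℝ) + b ≠ 0 := by linarith
  have h2' : (1 : ℝ) - t ≠ 0 := sub_ne_zero.mpr (Ne.symm h2)
  have h6' : w - 1 ≠ 0 := sub_ne_zero.mpr h6
  have hw' : w * (2 * b) = b + D := by rw [hw]; exact div_mul_cancel₀ _ (mul_ne_zero two_ne_zero hbne)
  have ht' : t * (2 * (1 - a) * (1 + b)) = 2 - 2 * a - b ^ 2 + b * D := by
    rw [ht]; exact div_mul_cancel₀ _ (mul_ne_zero (mul_ne_zero two_ne_zero ha) hb1')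
  have hDw : D = 2 * b * w - b := by linear_combination -hw'
  have hR2 : (1 - a) * ((1 + b) * t - 1) = b ^ 2 * (w - 1) := by
    linear_combination (1/2) * ht' + (b/2) * hDw
  have hR1 : b ^ 2 * (w ^ 2 - w) = a ^ 2 - a := by
    linear_combination (1/4) * hD2 - ((D + 2 * b * w - b)/4) * hDw
  have key : (2 * (1 - a) * (1 + b) * t - (2 - 2 * a - b ^ 2)) ^ 2
      = b ^ 2 * (b ^ 2 - 4 * a + 4 * a ^ 2) := by
    linear_combination (2 * (1 - a) * (1 + b) * t - (2 - 2 * a - b ^ 2) + b * D) * ht'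
      + b ^ 2 * hD2
  have hQt4 : (4 * (1 - a) * (1 + b)) *
      ((1 - a) * ((1 + b) * t ^ 2 - 2 * t + (1 - b)) + b ^ 2 * t) = 0 := by
    linear_combination key
  have hne : (4 : ℝ) * (1 - a) * (1 + b) ≠ 0 := by
    exact mul_ne_zero (mul_ne_zero (by norm_num) ha) hb1'
  have hQt : (1 - a) * ((1 + b) * t ^ 2 - 2 * t + (1 - b)) + b ^ 2 * t = 0 :=
    (mul_eq_zero.mp hQt4).resolve_left hne
  have hS1b : b * (b * (1 - (1 - t) * w)) = b * ((1 - a) * (1 - t)) := by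
    linear_combination (1 - t) * hR2 + hQt
  have hS1 : b * (1 - (1 - t) * w) = (1 - a) * (1 - t) := mul_left_cancel₀ hbne hS1b
  constructor
  · have e : b * w / (1 - (1 - t) * w) = b ^ 2 * w / ((1 - a) * (1 - t)) := by
      rw [div_eq_div_iff h9 (mul_ne_zero ha h2')]
      linear_combination (-(b * w)) * hS1
    rw [e]
    have e2 : b ^ 2 * w = (1 - a) * ((1 + b) * t - 1) + b ^ 2 := by linear_combination -hR2
    rw [e2]
    field_simp
    linear_combination hQt
  · have e3 : b * (1 - t) / (1 - (1 - t) * w) = b ^ 2 / (1 - a) := by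
      rw [div_eq_div_iff h9 ha]
      linear_combination (-b) * hS1
    rw [e3]
    field_simp
    linear_combination -hR1

/-- The two saddle points `(t_+, w_+)` and `(t_-, w_-)` satisfy the two saddle-point
equations `∂f/∂t = 0` and `∂f/∂w = 0` for the phase
`f(t,w) = b ln(1-t) + (1-b) ln t + a ln w - a ln(w-1) + b ln(1-(1-t)w)`. -/
theorem saddle_point_equations (a b D wp wm tp tm : ℝ)
    (hb0 : 0 < b) (hb1 : b < 1) (ha1 : a ≠ 1)
    (hD0 : 0 ≤ b ^ 2 - 4 * a + 4 * a ^ 2)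
    (hD : D = Real.sqrt (b ^ 2 - 4 * a + 4 * a ^ 2))
    (hwp : wp = (b + D) / (2 * b))
    (hwm : wm = (b - D) / (2 * b))
    (htp : tp = (2 - 2 * a - b ^ 2 + b * D) / (2 * (1 - a) * (1 + b)))
    (htm : tm = (2 - 2 * a - b ^ 2 - b * D) / (2 * (1 - a) * (1 + b)))
    (h1 : tp ≠ 0) (h2 : tp ≠ 1) (h3 : tm ≠ 0) (h4 : tm ≠ 1)
    (h5 : wp ≠ 0) (h6 : wp ≠ 1) (h7 : wm ≠ 0) (h8 : wm ≠ 1)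
    (h9 : 1 - (1 - tp) * wp ≠ 0) (h10 : 1 - (1 - tm) * wm ≠ 0) :
    (-b / (1 - tp) + (1 - b) / tp + b * wp / (1 - (1 - tp) * wp) = 0 ∧
      a / wp - a / (wp - 1) - b * (1 - tp) / (1 - (1 - tp) * wp) = 0) ∧
    (-b / (1 - tm) + (1 - b) / tm + b * wm / (1 - (1 - tm) * wm) = 0 ∧
      a / wm - a / (wm - 1) - b * (1 - tm) / (1 - (1 - tm) * wm) = 0) := by
  have hD2 : D ^ 2 = b ^ 2 - 4 * a + 4 * a ^ 2 := by rw [hD]; exact Real.sq_sqrt hD0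
  refine ⟨aux a b D tp wp hb0 hb1 ha1 hD2 hwp htp h1 h2 h5 h6 h9,
    aux a b (-D) tm wm hb0 hb1 ha1 (by rw [neg_pow]; simpa using hD2)
      (by rw [hwm]; ring_nf) (by rw [htm]; ring_nf) h3 h4 h7 h8 h10⟩
end

section
/- (Lemma 1(i)) Let a > 0 and define, for η ≤ -4a, k(η) = 2a · ln( (η - √(η² + 4aη))/(η + √(η² + 4aη)) ) - √(η² + 4aη). Then k is real-valued and strictly increasing on (-∞, -4a], k(-4a) = 0, and k(η) → -∞ as η → -∞; hence k maps (-∞, -4a] bijectively onto (-∞, 0]. -/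
open Filter Set

/-- `k(η) = 2a ln((η - √(η²+4aη))/(η + √(η²+4aη))) - √(η²+4aη)`. -/
noncomputable def kfun (a η : ℝ) : ℝ :=
  2 * a * Real.log ((η - Real.sqrt (η ^ 2 + 4 * a * η)) / (η + Real.sqrt (η ^ 2 + 4 * a * η))) -
    Real.sqrt (η ^ 2 + 4 * a * η)

lemma kfun_continuousOn (a : ℝ) (ha : 0 < a) :
    ContinuousOn (kfun a) (Set.Iic (-4 * a)) := by
  intro η hη
  simp only [Set.mem_Iic] at hη
  have hη0 : η < 0 := by nlinarith
  have hD : 0 ≤ η ^ 2 + 4 * a * η := by nlinarith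
  set s := Real.sqrt (η ^ 2 + 4 * a * η) with hs
  have hs0 : 0 ≤ s := Real.sqrt_nonneg _
  have hslt : s < -η := by rw [hs, Real.sqrt_lt' (by linarith)]; nlinarith
  have hd : η + s < 0 := by linarith
  have hn : η - s < 0 := by linarith
  have hc0 : ContinuousAt (fun x : ℝ => Real.sqrt (x ^ 2 + 4 * a * x)) η :=
    (Real.continuous_sqrt.comp (by continuity)).continuousAt
  have hcr : ContinuousAt (fun x : ℝ =>
      (x - Real.sqrt (x ^ 2 + 4 * a * x)) / (x + Real.sqrt (x ^ 2 + 4 * a * x))) η :=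
    ((continuousAt_id.sub hc0).div (continuousAt_id.add hc0) hd.ne)
  have hr : (η - s) / (η + s) ≠ 0 := div_ne_zero hn.ne hd.ne
  have : ContinuousAt (kfun a) η := ((hcr.log hr).const_mul (2 * a)).sub hc0
  exact this.continuousWithinAt

lemma kfun_hasDerivAt (a η : ℝ) (ha : 0 < a) (hη : η < -4 * a) :
    HasDerivAt (kfun a) (-(η + 4 * a) / Real.sqrt (η ^ 2 + 4 * a * η)) η := by
  set s := Real.sqrt (η ^ 2 + 4 * a * η) with hs
  have hη0 : η < 0 := by nlinarith
  have hDpos : 0 < η ^ 2 + 4 * a * η := by nlinarith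
  have hspos : 0 < s := Real.sqrt_pos.mpr hDpos
  have hs2 : s ^ 2 = η ^ 2 + 4 * a * η := Real.sq_sqrt hDpos.le
  have hslt : s < -η := by rw [hs, Real.sqrt_lt' (by linarith)]; nlinarith
  have hd : η + s < 0 := by linarith
  have hn : η - s < 0 := by linarith
  have hr : (η - s) / (η + s) ≠ 0 := div_ne_zero hn.ne hd.ne
  have hD' : HasDerivAt (fun x : ℝ => x ^ 2 + 4 * a * x) (2 * η + 4 * a) η := by
    simpa using ((hasDerivAt_pow 2 η).fun_add ((hasDerivAt_id η).const_mul (4 * a)))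
  have hS : HasDerivAt (fun x : ℝ => Real.sqrt (x ^ 2 + 4 * a * x))
      ((2 * η + 4 * a) / (2 * s)) η := hD'.sqrt hDpos.ne'
  have hN : HasDerivAt (fun x : ℝ => x - Real.sqrt (x ^ 2 + 4 * a * x))
      (1 - (2 * η + 4 * a) / (2 * s)) η := (hasDerivAt_id η).sub hS
  have hDen : HasDerivAt (fun x : ℝ => x + Real.sqrt (x ^ 2 + 4 * a * x))
      (1 + (2 * η + 4 * a) / (2 * s)) η := (hasDerivAt_id η).add hS
  have hQ := hN.div hDen hd.ne
  have hL := hQ.log hr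
  have h := (hL.const_mul (2 * a)).sub hS
  simp only [Pi.div_apply, ← hs] at h
  have hX : ((1 - (2 * η + 4 * a) / (2 * s)) * (η + s) -
      (η - s) * (1 + (2 * η + 4 * a) / (2 * s))) / (η + s) ^ 2 / ((η - s) / (η + s))
      = -1 / s := by
    field_simp [hn.ne, hd.ne, sub_ne_zero.mpr hslt.ne]
    linear_combination 2 * hs2
  rw [hX] at h
  refine h.congr_deriv ?_
  field_simp
  ring

lemma kfun_strictMonoOn (a : ℝ) (ha : 0 < a) :
    StrictMonoOn (kfun a) (Set.Iic (-4 * a)) := by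
  apply strictMonoOn_of_deriv_pos (convex_Iic _) (kfun_continuousOn a ha)
  intro x hx
  rw [interior_Iic, Set.mem_Iio] at hx
  rw [(kfun_hasDerivAt a x ha hx).deriv]
  have hDpos : 0 < x ^ 2 + 4 * a * x := by nlinarith
  exact div_pos (by linarith) (Real.sqrt_pos.mpr hDpos)

lemma kfun_at_endpoint (a : ℝ) (ha : 0 < a) : kfun a (-4 * a) = 0 := by
  rw [kfun, show (-4 * a) ^ 2 + 4 * a * (-4 * a) = 0 by ring, Real.sqrt_zero, sub_zero,
    add_zero, sub_zero, div_self (by nlinarith : (-4:ℝ) * a ≠ 0), Real.log_one]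
  ring

lemma kfun_bound (a η : ℝ) (ha : 0 < a) (hη : η ≤ -256 * a) : kfun a η ≤ η / 4 := by
  have hη0 : η < 0 := by nlinarith
  have hDpos : 0 < η ^ 2 + 4 * a * η := by nlinarith
  set s := Real.sqrt (η ^ 2 + 4 * a * η) with hs
  have hspos : 0 < s := Real.sqrt_pos.mpr hDpos
  have hs2 : s ^ 2 = η ^ 2 + 4 * a * η := Real.sq_sqrt hDpos.le
  have hslt : s < -η := by rw [hs, Real.sqrt_lt' (by linarith)]; nlinarith
  have hd : η + s < 0 := by linarith
  have hn : η - s < 0 := by linarith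
  -- s ≥ -η/2
  have hsge : -η / 2 ≤ s := by
    rw [hs, show -η / 2 = Real.sqrt ((-η / 2) ^ 2) from (Real.sqrt_sq (by linarith)).symm]
    apply Real.sqrt_le_sqrt
    nlinarith
  -- ratio bound: r ≤ -η/a
  have hrpos : 0 < (η - s) / (η + s) := div_pos_of_neg_of_neg hn hd
  have hslt2 : s ≤ -η - 2 * a := by
    have h1 := Real.sqrt_le_sqrt (show η ^ 2 + 4 * a * η ≤ (-η - 2 * a) ^ 2 by nlinarith)
    rwa [Real.sqrt_sq (by nlinarith : (0:ℝ) ≤ -η - 2 * a)] at h1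
  have key : -η * (η + s) ≤ (η - s) * a := by nlinarith
  have hratio : (η - s) / (η + s) ≤ -η / a := by
    rw [div_le_iff_of_neg hd, div_mul_eq_mul_div, div_le_iff₀ ha]
    linarith [key]
  -- log bound
  have hlog : Real.log ((η - s) / (η + s)) ≤ 2 * Real.sqrt (-η / a) := by
    calc Real.log ((η - s) / (η + s)) ≤ Real.log (-η / a) :=
          Real.log_le_log hrpos hratio
      _ = 2 * Real.log (Real.sqrt (-η / a)) := by
          rw [Real.log_sqrt (div_nonneg (by linarith) ha.le)]; ring
      _ ≤ 2 * (Real.sqrt (-η / a) - 1) := by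
          have := Real.log_le_sub_one_of_pos
            (Real.sqrt_pos.mpr (div_pos (by linarith) ha) : 0 < Real.sqrt (-η / a))
          linarith
      _ ≤ 2 * Real.sqrt (-η / a) := by linarith
  -- sqrt bound
  have hsq : Real.sqrt (-η / a) ≤ -η / (16 * a) := by
    rw [show -η / (16 * a) = Real.sqrt ((-η / (16 * a)) ^ 2) from
      (Real.sqrt_sq (div_nonneg (by linarith) (by linarith))).symm]
    apply Real.sqrt_le_sqrt
    rw [div_pow, div_le_div_iff₀ (by positivity) (by positivity)]
    nlinarith [mul_le_mul_of_nonneg_right (show 256 * a ≤ -η by linarith)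
      (show (0:ℝ) ≤ a * -η by nlinarith)]
  have h4a : 4 * a * Real.sqrt (-η / a) ≤ -η / 4 := by
    have := mul_le_mul_of_nonneg_left hsq (by positivity : (0:ℝ) ≤ 4 * a)
    calc 4 * a * Real.sqrt (-η / a) ≤ 4 * a * (-η / (16 * a)) := this
      _ = -η / 4 := by field_simp; ring
  calc kfun a η = 2 * a * Real.log ((η - s) / (η + s)) - s := rfl
    _ ≤ 2 * a * (2 * Real.sqrt (-η / a)) - (-η / 2) := by
        have := mul_le_mul_of_nonneg_left hlog (by positivity : (0:ℝ) ≤ 2 * a)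
        linarith
    _ = 4 * a * Real.sqrt (-η / a) + η / 2 := by ring
    _ ≤ -η / 4 + η / 2 := by linarith
    _ = η / 4 := by ring

lemma kfun_tendsto_atBot (a : ℝ) (ha : 0 < a) : Tendsto (kfun a) atBot atBot := by
  have h2 : Tendsto (fun η : ℝ => η / 4) atBot atBot :=
    Tendsto.atBot_div_const (by norm_num) tendsto_id
  refine tendsto_atBot_mono' atBot ?_ h2
  filter_upwards [eventually_le_atBot (-256 * a)] with η hη
  exact kfun_bound a η ha hη

/-- (Lemma 1(i)) For `a > 0`, the function `k` is strictly increasing on `(-∞, -4a]`,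
vanishes at `η = -4a`, tends to `-∞` as `η → -∞`, and maps `(-∞, -4a]` bijectively
onto `(-∞, 0]`. -/
theorem kfun_strictMono_bijective (a : ℝ) (ha : 0 < a) :
    StrictMonoOn (kfun a) (Set.Iic (-4 * a)) ∧
    kfun a (-4 * a) = 0 ∧
    Tendsto (kfun a) atBot atBot ∧
    Set.BijOn (kfun a) (Set.Iic (-4 * a)) (Set.Iic (0 : ℝ)) := by
  have hmono := kfun_strictMonoOn a ha
  have hend := kfun_at_endpoint a ha
  have htend := kfun_tendsto_atBot a ha
  refine ⟨hmono, hend, htend, ?_, hmono.injOn, ?_⟩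
  · -- MapsTo
    intro η hη
    simp only [Set.mem_Iic] at hη ⊢
    rw [← hend]
    exact hmono.monotoneOn hη (Set.self_mem_Iic) hη
  · -- SurjOn
    intro y hy
    simp only [Set.mem_Iic] at hy
    have hev : ∀ᶠ η in atBot, kfun a η ≤ y ∧ η ≤ -4 * a :=
      (htend.eventually_le_atBot y).and (eventually_le_atBot (-4 * a))
    obtain ⟨η₀, hη₀⟩ := hev.exists
    have hsub : Set.Icc (kfun a η₀) (kfun a (-4 * a)) ⊆ kfun a '' Set.Icc η₀ (-4 * a) :=
      intermediate_value_Icc hη₀.2 ((kfun_continuousOn a ha).mono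
        (fun x hx => hx.2))
    have hy' : y ∈ Set.Icc (kfun a η₀) (kfun a (-4 * a)) := by
      rw [hend]; exact ⟨hη₀.1, hy⟩
    obtain ⟨x, hx, hxy⟩ := hsub hy'
    exact ⟨x, hx.2, hxy⟩
end

section
/- Let b ∈ (0,1), a_- = (1 - √(1 - b²))/2, and 0 < a < a_-. With w_± = (b ± √(b² - 4a + 4a²))/(2b) and t_± = (2 - 2a - b² ± b√(b² - 4a + 4a²))/(2(1-a)(1+b)), define F(t,w) = b ln(1-t) + (1-b) ln t + a ln w - a ln(1-w) + b ln(1-(1-t)w) for t, w ∈ (0,1). Then 0 < t_±, w_± < 1, 1 - (1-t_±)w_± > 0, and the strict inequality F(t_-, w_-) > F(t_+, w_+) holds. -/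
noncomputable def gfun (b x : ℝ) : ℝ :=
  2*b*(Real.log (1 + (Real.sqrt (1-b^2+x^2) + b + x)) - Real.log (1 + (Real.sqrt (1-b^2+x^2) + b - x)))
  + (1-b)*(Real.log (1 + (Real.sqrt (1-b^2+x^2) - b^2 - b*x)) - Real.log (1 + (Real.sqrt (1-b^2+x^2) - b^2 + b*x)))
  - (1 - Real.sqrt (1-b^2+x^2))*(Real.log (b+x) - Real.log (b-x))

lemma gfun_deriv (b x : ℝ) (hb0 : 0 < b) (hb1 : b < 1) (hx0 : 0 ≤ x) (hxb : x < b) :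
    HasDerivAt (gfun b) (x / Real.sqrt (1-b^2+x^2) * (Real.log (b+x) - Real.log (b-x))) x := by
  have harg : 0 < 1 - b^2 + x^2 := by nlinarith
  set s := Real.sqrt (1-b^2+x^2) with hsdef
  have hspos : 0 < s := Real.sqrt_pos.mpr harg
  have hs2 : s^2 = 1 - b^2 + x^2 := Real.sq_sqrt harg.le
  clear_value s
  have hsx : x < s := by nlinarith
  have hs1 : s < 1 := by nlinarith
  have hds : HasDerivAt (fun y : ℝ => Real.sqrt (1-b^2+y^2)) (x / s) x := by
    have h1 : HasDerivAt (fun y : ℝ => 1-b^2+y^2) (2*x) x := by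
      simpa using ((hasDerivAt_pow 2 x).const_add (1-b^2))
    have h2 := h1.sqrt (ne_of_gt harg)
    convert h2 using 1
    rw [← hsdef]
    field_simp
  have hc1 : (0:ℝ) < 1 + (s + b + x) := by positivity
  have hc2 : (0:ℝ) < 1 + (s + b - x) := by nlinarith
  have hmkey : (1 + (s - b^2 - b*x)) * (1 + (s - b^2 + b*x)) = (1-b^2)*(1+s)^2 := by
    linear_combination (b^2) * hs2
  have hm2 : (0:ℝ) < 1 + (s - b^2 + b*x) := by nlinarith
  have hm1 : (0:ℝ) < 1 + (s - b^2 - b*x) := by nlinarith [mul_pos (mul_pos (show (0:ℝ) < 1-b^2 by nlinarith) (show (0:ℝ)<(1+s) by positivity)) (show (0:ℝ)<(1+s) by positivity)]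
  have hbx1 : (0:ℝ) < b + x := by positivity
  have hbx2 : (0:ℝ) < b - x := by linarith
  have H1 : HasDerivAt (fun y : ℝ => Real.log (1 + (Real.sqrt (1-b^2+y^2) + b + y)))
      ((x/s + 1)/(1 + (Real.sqrt (1-b^2+x^2) + b + x))) x :=
    (((hds.add_const b).add (hasDerivAt_id' x)).const_add 1).log (by rw [hsdef] at hc1; exact ne_of_gt hc1)
  have H2 : HasDerivAt (fun y : ℝ => Real.log (1 + (Real.sqrt (1-b^2+y^2) + b - y)))
      ((x/s - 1)/(1 + (Real.sqrt (1-b^2+x^2) + b - x))) x :=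
    (((hds.add_const b).sub (hasDerivAt_id' x)).const_add 1).log (by rw [hsdef] at hc2; exact ne_of_gt hc2)
  have H3 : HasDerivAt (fun y : ℝ => Real.log (1 + (Real.sqrt (1-b^2+y^2) - b^2 - b*y)))
      ((x/s - b*1)/(1 + (Real.sqrt (1-b^2+x^2) - b^2 - b*x))) x :=
    (((hds.sub_const (b^2)).sub ((hasDerivAt_id' x).const_mul b)).const_add 1).log (by rw [hsdef] at hm1; exact ne_of_gt hm1)
  have H4 : HasDerivAt (fun y : ℝ => Real.log (1 + (Real.sqrt (1-b^2+y^2) - b^2 + b*y)))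
      ((x/s + b*1)/(1 + (Real.sqrt (1-b^2+x^2) - b^2 + b*x))) x :=
    (((hds.sub_const (b^2)).add ((hasDerivAt_id' x).const_mul b)).const_add 1).log (by rw [hsdef] at hm2; exact ne_of_gt hm2)
  have H5 : HasDerivAt (fun y : ℝ => Real.log (b + y)) (1/(b+x)) x :=
    ((hasDerivAt_id' x).const_add b).log (ne_of_gt hbx1)
  have H6 : HasDerivAt (fun y : ℝ => Real.log (b - y)) (-1/(b-x)) x :=
    ((hasDerivAt_id' x).const_sub b).log (ne_of_gt hbx2)
  have Htot := ((((H1.sub H2).const_mul (2*b)).add ((H3.sub H4).const_mul (1-b))).sub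
    ((hds.const_sub 1).mul (H5.sub H6)))
  have hfun : gfun b = fun y : ℝ =>
      2*b*(Real.log (1 + (Real.sqrt (1-b^2+y^2) + b + y)) - Real.log (1 + (Real.sqrt (1-b^2+y^2) + b - y)))
      + (1-b)*(Real.log (1 + (Real.sqrt (1-b^2+y^2) - b^2 - b*y)) - Real.log (1 + (Real.sqrt (1-b^2+y^2) - b^2 + b*y)))
      - (1 - Real.sqrt (1-b^2+y^2))*(Real.log (b+y) - Real.log (b-y)) := by
    funext y; rfl
  rw [hfun]
  convert Htot using 1
  · rfl
  · rfl
  · rfl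
  rw [← hsdef]
  have hR : 2*b*((x/s + 1)/(1 + (s + b + x)) - (x/s - 1)/(1 + (s + b - x)))
      + (1-b)*((x/s - b*1)/(1 + (s - b^2 - b*x)) - (x/s + b*1)/(1 + (s - b^2 + b*x)))
      - (1-s)*(1/(b+x) - -1/(b-x)) = 0 := by
    field_simp
    ring_nf
    linear_combination ((2*b*s) + (6*b*s^2) + (6*b*s^3) + (2*b*s^4) + (-2*b*x^2*s) + (-2*b*x^2*s^2) + (-2*b*x^4) + (4*b^2*s) + (8*b^2*s^2) + (4*b^2*s^3) + (-2*b^2*x^2*s) + (-2*b^2*x^2*s^2) + (2*b^2*x^4) + (-2*b^3*s) + (-6*b^3*s^2) + (-4*b^3*s^3) + (2*b^3*x^2) + (-2*b^3*x^2*s^2) + (4*b^3*x^4) + (-6*b^4*s) + (-6*b^4*s^2) + (-2*b^4*x^2) + (-2*b^4*x^2*s) + (2*b^5*s^2) + (-4*b^5*x^2) + (2*b^6*s)) * hs2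
  rw [Pi.sub_apply]; linear_combination -hR

lemma gfun_zero (b : ℝ) : gfun b 0 = 0 := by
  simp [gfun]

lemma gfun_pos (b D : ℝ) (hb0 : 0 < b) (hb1 : b < 1) (hD0 : 0 < D) (hDb : D < b) :
    0 < gfun b D := by
  have hmono : StrictMonoOn (gfun b) (Set.Icc 0 D) := by
    apply strictMonoOn_of_deriv_pos (convex_Icc 0 D)
    · intro y hy
      exact (gfun_deriv b y hb0 hb1 hy.1 (lt_of_le_of_lt hy.2 hDb)).continuousAt.continuousWithinAt
    · intro y hy
      rw [interior_Icc] at hy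
      have hyb : y < b := hy.2.trans hDb
      rw [(gfun_deriv b y hb0 hb1 hy.1.le hyb).deriv]
      have harg : 0 < 1 - b^2 + y^2 := by nlinarith
      have hlog : Real.log (b - y) < Real.log (b + y) :=
        Real.log_lt_log (by linarith [hy.1]) (by linarith [hy.1])
      have h1 : 0 < y / Real.sqrt (1-b^2+y^2) := div_pos hy.1 (Real.sqrt_pos.mpr harg)
      have h2 : 0 < Real.log (b+y) - Real.log (b-y) := by linarith
      exact mul_pos h1 h2
  have h := hmono (Set.left_mem_Icc.mpr hD0.le) (Set.right_mem_Icc.mpr hD0.le) hD0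
  rwa [gfun_zero] at h

lemma aux_inner (t w : ℝ) (ht0 : 0 < t) (hw1 : w < 1) (hw0 : 0 < w) :
    0 < 1 - (1 - t) * w := by nlinarith [mul_pos ht0 hw0]

/-- Real phase `F(t,w) = b ln(1-t) + (1-b) ln t + a ln w - a ln(1-w) + b ln(1-(1-t)w)`. -/
noncomputable def Fphase (a b t w : ℝ) : ℝ :=
  b * Real.log (1 - t) + (1 - b) * Real.log t + a * Real.log w - a * Real.log (1 - w) +
    b * Real.log (1 - (1 - t) * w)

set_option maxHeartbeats 2000000 in
/-- For `0 < a < a_-`, the saddle points satisfy `0 < t_±, w_± < 1`,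
`1 - (1 - t_±) w_± > 0`, and `F(t_-, w_-) > F(t_+, w_+)`. -/
theorem Fphase_saddle_comparison (a b D wp wm tp tm : ℝ)
    (hb : b ∈ Set.Ioo (0 : ℝ) 1)
    (ha : 0 < a) (ha' : a < (1 - Real.sqrt (1 - b ^ 2)) / 2)
    (hD : D = Real.sqrt (b ^ 2 - 4 * a + 4 * a ^ 2))
    (hwp : wp = (b + D) / (2 * b))
    (hwm : wm = (b - D) / (2 * b))
    (htp : tp = (2 - 2 * a - b ^ 2 + b * D) / (2 * (1 - a) * (1 + b)))
    (htm : tm = (2 - 2 * a - b ^ 2 - b * D) / (2 * (1 - a) * (1 + b))) :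
    (0 < tp ∧ tp < 1) ∧ (0 < tm ∧ tm < 1) ∧
    (0 < wp ∧ wp < 1) ∧ (0 < wm ∧ wm < 1) ∧
    0 < 1 - (1 - tp) * wp ∧ 0 < 1 - (1 - tm) * wm ∧
    Fphase a b tp wp < Fphase a b tm wm := by
  obtain ⟨hb0, hb1⟩ := hb
  have hb2 : (0:ℝ) ≤ 1 - b^2 := by nlinarith
  have hsq := Real.sq_sqrt hb2
  have hsnn := Real.sqrt_nonneg (1 - b^2)
  have ha2 : a < 1/2 := by nlinarith
  have h2a : Real.sqrt (1 - b^2) < 1 - 2*a := by nlinarith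
  have hXpos : 0 < b^2 - 4*a + 4*a^2 := by nlinarith
  have hD0 : 0 < D := hD ▸ Real.sqrt_pos.mpr hXpos
  have hD2 : D^2 = b^2 - 4*a + 4*a^2 := hD ▸ Real.sq_sqrt hXpos.le
  have hDb : D < b := by nlinarith
  clear hD ha'
  have hP : (0:ℝ) < 2*(1-a)*(1+b) := by nlinarith
  have key : (2-2*a-b^2)^2 - b^2*D^2 = 4*(1-b^2)*(1-a)^2 := by linear_combination (-(b^2)) * hD2
  have hm0 : (0:ℝ) < 2-2*a-b^2 := by clear htp htm hwp hwm; nlinarith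
  have hNp : (0:ℝ) < 2-2*a-b^2+b*D := by clear htp htm hwp hwm; nlinarith
  have hprod : (2-2*a-b^2-b*D)*(2-2*a-b^2+b*D) = 4*(1-b^2)*(1-a)^2 := by
    linear_combination (-(b^2)) * hD2
  have hrhs : (0:ℝ) < 4*(1-b^2)*(1-a)^2 := by clear htp htm hwp hwm; nlinarith
  have hNm : (0:ℝ) < 2-2*a-b^2-b*D := by
    have h1 : 0 < (2-2*a-b^2-b*D)*(2-2*a-b^2+b*D) := hprod ▸ hrhs
    rcases mul_pos_iff.mp h1 with ⟨h, _⟩ | ⟨_, h⟩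
    · exact h
    · linarith
  have hCp : (0:ℝ) < 2-2*a+b+D := by clear htp htm hwp hwm; nlinarith
  have hCm : (0:ℝ) < 2-2*a+b-D := by clear htp htm hwp hwm; nlinarith
  have hPNp : 2-2*a-b^2+b*D < 2*(1-a)*(1+b) := by clear htp htm hwp hwm; nlinarith [mul_pos hb0 hCm]
  have hPNm : 2-2*a-b^2-b*D < 2*(1-a)*(1+b) := by clear htp htm hwp hwm; nlinarith [mul_pos hb0 hCp]
  have htp0 : 0 < tp := htp ▸ div_pos hNp hP
  have htp1 : tp < 1 := by rw [htp, div_lt_one hP]; exact hPNp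
  have htm0 : 0 < tm := htm ▸ div_pos hNm hP
  have htm1 : tm < 1 := by rw [htm, div_lt_one hP]; exact hPNm
  have hwp0 : 0 < wp := hwp ▸ div_pos (by linarith) (by linarith)
  have hwp1 : wp < 1 := by rw [hwp, div_lt_one (by linarith)]; linarith
  have hwm0 : 0 < wm := hwm ▸ div_pos (by linarith) (by linarith)
  have hwm1 : wm < 1 := by rw [hwm, div_lt_one (by linarith)]; linarith
  have hip : 0 < 1 - (1 - tp) * wp := aux_inner tp wp htp0 hwp1 hwp0
  have him : 0 < 1 - (1 - tm) * wm := aux_inner tm wm htm0 hwm1 hwm0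
  refine ⟨⟨htp0, htp1⟩, ⟨htm0, htm1⟩, ⟨hwp0, hwp1⟩, ⟨hwm0, hwm1⟩, hip, him, ?_⟩
  -- the key inequality
  have hgpos : 0 < gfun b D := gfun_pos b D hb0 hb1 hD0 hDb
  have hsqrt : Real.sqrt (1 - b^2 + D^2) = 1 - 2*a := by
    rw [show 1 - b^2 + D^2 = (1-2*a)^2 by linear_combination hD2]
    exact Real.sqrt_sq (by linarith)
  have h2b : (2*b : ℝ) ≠ 0 := by positivity
  have h21b : (2*(1+b) : ℝ) ≠ 0 := by positivity
  have hbD1 : (0:ℝ) < b + D := by linarith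
  have hbD2 : (0:ℝ) < b - D := by linarith
  have hkey : Fphase a b tm wm - Fphase a b tp wp = gfun b D := by
    have e1p : 1 - tp = b*(2-2*a+b-D)/(2*(1-a)*(1+b)) := by
      rw [htp]; field_simp [show (1:ℝ)-a ≠ 0 by linarith]; ring
    have e1m : 1 - tm = b*(2-2*a+b+D)/(2*(1-a)*(1+b)) := by
      rw [htm]; field_simp [show (1:ℝ)-a ≠ 0 by linarith]; ring
    have e4p : 1 - wp = (b-D)/(2*b) := by
      rw [hwp]; field_simp [show (1:ℝ)-a ≠ 0 by linarith]; ring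
    have e4m : 1 - wm = (b+D)/(2*b) := by
      rw [hwm]; field_simp [show (1:ℝ)-a ≠ 0 by linarith]; ring
    have e5p : 1 - (1-tp)*wp = (2-2*a+b-D)/(2*(1+b)) := by
      rw [htp, hwp]; field_simp [show (1:ℝ)-a ≠ 0 by linarith]; linear_combination b * hD2
    have e5m : 1 - (1-tm)*wm = (2-2*a+b+D)/(2*(1+b)) := by
      rw [htm, hwm]; field_simp [show (1:ℝ)-a ≠ 0 by linarith]; linear_combination b * hD2
    simp only [Fphase, gfun]
    rw [e5p, e5m, e1p, e1m, e4p, e4m, htp, htm, hwp, hwm, hsqrt]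
    rw [show (1:ℝ) + (1-2*a+b+D) = 2-2*a+b+D by ring,
        show (1:ℝ) + (1-2*a+b-D) = 2-2*a+b-D by ring,
        show (1:ℝ) + (1-2*a-b^2-b*D) = 2-2*a-b^2-b*D by ring,
        show (1:ℝ) + (1-2*a-b^2+b*D) = 2-2*a-b^2+b*D by ring,
        show (1:ℝ) - (1-2*a) = 2*a by ring]
    rw [Real.log_div (mul_ne_zero hb0.ne' hCm.ne') hP.ne',
        Real.log_div (mul_ne_zero hb0.ne' hCp.ne') hP.ne',
        Real.log_mul hb0.ne' hCm.ne', Real.log_mul hb0.ne' hCp.ne',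
        Real.log_div hNp.ne' hP.ne', Real.log_div hNm.ne' hP.ne',
        Real.log_div hbD1.ne' h2b, Real.log_div hbD2.ne' h2b,
        Real.log_div hCm.ne' h21b, Real.log_div hCp.ne' h21b]
    ring
  linarith
end
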